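/- Let f be a discrete Morse-Bott function on a finite abstract simplicial complex K, C a collection for f with common value v, and I = C^red its reduced collection. Let N be the closure of I and E = {σ ∈ N ∖ I : f(σ) ≤ v}. Then N ∖ E = C^red; equivalently, E = N ∖ C^red. -/

import Mathlib

open Finset

noncomputable section
open scoped Classical

/-- `σ` is a facet of `τ`: `σ ⊆ τ` and `dim σ = dim τ − 1`. -/
def Facet (σ τ : Finset ℕ) : Prop := σ ⊆ τ ∧ σ.card + 1 = τ.card

/-- A finite abstract simplicial complex: a finite family of nonempty finite sets
closed under taking nonempty subsets. -/
def IsComplex (K : Finset (Finset ℕ)) : Prop :=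
  (∀ σ ∈ K, σ.Nonempty) ∧ ∀ σ ∈ K, ∀ ν, ν ⊆ σ → ν.Nonempty → ν ∈ K

/-- The closure of a set of cells: all nonempty subsets of its cells. -/
def closureOf (S : Finset (Finset ℕ)) : Finset (Finset ℕ) :=
  S.biUnion fun σ => σ.powerset.filter fun ν => ν ≠ ∅

/-- The graph on `C` joining two cells whenever their closures intersect is connected. -/
def ConnectedOn (C : Finset (Finset ℕ)) : Prop :=
  ∀ a ∈ C, ∀ b ∈ C,
    Relation.ReflTransGen
      (fun x y => x ∈ C ∧ y ∈ C ∧ (closureOf {x} ∩ closureOf {y}).Nonempty) a b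

/-- A nonempty set of cells of `K`, all with the same `f`-value, whose
closure-intersection graph is connected. -/
def IsPreCollection (K : Finset (Finset ℕ)) (f : Finset ℕ → ℝ) (C : Finset (Finset ℕ)) :
    Prop :=
  C ⊆ K ∧ C.Nonempty ∧ (∀ σ ∈ C, ∀ τ ∈ C, f σ = f τ) ∧ ConnectedOn C

/-- A collection for `f`: a maximal constant-value connected set of cells. -/
def IsCollection (K : Finset (Finset ℕ)) (f : Finset ℕ → ℝ) (C : Finset (Finset ℕ)) :
    Prop :=
  IsPreCollection K f C ∧ ∀ C', IsPreCollection K f C' → C ⊆ C' → C' = C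

/-- `#{τ ∉ C : σ < τ, f(τ) < f(σ)}`. -/
def UpCount (K : Finset (Finset ℕ)) (f : Finset ℕ → ℝ) (C : Finset (Finset ℕ))
    (σ : Finset ℕ) : ℕ :=
  (K.filter fun τ => τ ∉ C ∧ Facet σ τ ∧ f τ < f σ).card

/-- `#{ν ∉ C : ν < σ, f(ν) > f(σ)}`. -/
def DownCount (K : Finset (Finset ℕ)) (f : Finset ℕ → ℝ) (C : Finset (Finset ℕ))
    (σ : Finset ℕ) : ℕ :=
  (K.filter fun ν => ν ∉ C ∧ Facet ν σ ∧ f σ < f ν).card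

/-- A discrete Morse-Bott function on `K`. -/
def IsMorseBott (K : Finset (Finset ℕ)) (f : Finset ℕ → ℝ) : Prop :=
  ∀ C, IsCollection K f C → ∀ σ ∈ C, UpCount K f C σ ≤ 1 ∧ DownCount K f C σ ≤ 1

/-- `σ` is upward noncritical w.r.t. `C`. -/
def UpNoncrit (K : Finset (Finset ℕ)) (f : Finset ℕ → ℝ) (C : Finset (Finset ℕ))
    (σ : Finset ℕ) : Prop :=
  ∃ w ∈ K, w ∉ C ∧ Facet σ w ∧ f w < f σ

/-- `σ` is downward noncritical w.r.t. `C`. -/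
def DownNoncrit (K : Finset (Finset ℕ)) (f : Finset ℕ → ℝ) (C : Finset (Finset ℕ))
    (σ : Finset ℕ) : Prop :=
  ∃ w ∈ K, w ∉ C ∧ Facet w σ ∧ f σ < f w

/-- The reduced collection `C^red`: the cells of `C` that are neither upward nor
downward noncritical w.r.t. `C`. -/
def reducedOf (K : Finset (Finset ℕ)) (f : Finset ℕ → ℝ) (C : Finset (Finset ℕ)) :
    Finset (Finset ℕ) :=
  C.filter fun σ => ¬ UpNoncrit K f C σ ∧ ¬ DownNoncrit K f C σ

/-- A noncritical pair: a two-element set `{σ, τ}` with `σ < τ` and `f σ ≥ f τ`. -/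
def IsNoncritPair (f : Finset ℕ → ℝ) (S : Finset (Finset ℕ)) : Prop :=
  ∃ σ τ, Facet σ τ ∧ f τ ≤ f σ ∧ S = {σ, τ}

/-- A discrete Morse function in Forman's sense. -/
def IsDiscreteMorse (K : Finset (Finset ℕ)) (g : Finset ℕ → ℝ) : Prop :=
  ∀ σ ∈ K, (K.filter fun τ => Facet σ τ ∧ g τ ≤ g σ).card ≤ 1 ∧
    (K.filter fun ν => Facet ν σ ∧ g σ ≤ g ν).card ≤ 1

/-- A critical cell of `g`. -/
def IsCritical (K : Finset (Finset ℕ)) (g : Finset ℕ → ℝ) (σ : Finset ℕ) : Prop :=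
  σ ∈ K ∧ (K.filter fun τ => Facet σ τ ∧ g τ ≤ g σ).card = 0 ∧
    (K.filter fun ν => Facet ν σ ∧ g σ ≤ g ν).card = 0

/-! Since `I ⊆ N`, both identities reduce to `f σ ≤ v` for every face `σ` of a cell
`τ ∈ C^red`, which goes by induction on `#(τ \ σ)`. A facet `σ` of `τ` with `f σ > v` would
make `τ` downward noncritical. A face of codimension at least two with `f σ > v` has, by
induction, at least two cofacets inside `τ` of smaller value, which the Morse-Bott condition
on the collection of `σ` forbids. -/

lemma mem_closureOf {S : Finset (Finset ℕ)} {σ : Finset ℕ} :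
    σ ∈ closureOf S ↔ ∃ τ ∈ S, σ ⊆ τ ∧ σ.Nonempty := by
  simp [closureOf, Finset.nonempty_iff_ne_empty]

lemma subset_closureOf {S : Finset (Finset ℕ)} (hS : ∀ σ ∈ S, σ.Nonempty) :
    S ⊆ closureOf S :=
  fun σ hσ => mem_closureOf.2 ⟨σ, hσ, subset_rfl, hS σ hσ⟩

lemma Facet.insert {σ : Finset ℕ} {x : ℕ} (hx : x ∉ σ) : Facet σ (insert x σ) :=
  ⟨Finset.subset_insert x σ, (Finset.card_insert_of_notMem hx).symm⟩

lemma IsPreCollection.singleton {K : Finset (Finset ℕ)} (f : Finset ℕ → ℝ) {σ : Finset ℕ}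
    (hσ : σ ∈ K) : IsPreCollection K f {σ} := by
  refine ⟨Finset.singleton_subset_iff.2 hσ, Finset.singleton_nonempty σ, ?_, ?_⟩ <;>
  · intro a ha b hb
    rw [Finset.mem_singleton.1 ha, Finset.mem_singleton.1 hb]

lemma exists_isCollection_mem {K : Finset (Finset ℕ)} (f : Finset ℕ → ℝ) {σ : Finset ℕ}
    (hσ : σ ∈ K) : ∃ C, IsCollection K f C ∧ σ ∈ C := by
  set S := K.powerset.filter fun D => IsPreCollection K f D ∧ σ ∈ D
  have hσS : {σ} ∈ S := Finset.mem_filter.2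
    ⟨Finset.mem_powerset.2 (Finset.singleton_subset_iff.2 hσ),
      IsPreCollection.singleton f hσ, Finset.mem_singleton_self σ⟩
  obtain ⟨D, hDS, hDmax⟩ := S.exists_max_image Finset.card ⟨_, hσS⟩
  obtain ⟨-, hD, hσD⟩ := Finset.mem_filter.1 hDS
  refine ⟨D, ⟨hD, fun D' hD' hDD' => ?_⟩, hσD⟩
  have hD'S : D' ∈ S := Finset.mem_filter.2 ⟨Finset.mem_powerset.2 hD'.1, hD', hDD' hσD⟩
  exact (Finset.eq_of_subset_of_card_le hDD' (hDmax D' hD'S)).symm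

lemma IsCollection.eq_of_mem {K C : Finset (Finset ℕ)} {f : Finset ℕ → ℝ}
    (hC : IsCollection K f C) {σ τ : Finset ℕ} (hσ : σ ∈ C) (hτ : τ ∈ C) : f σ = f τ :=
  hC.1.2.2.1 σ hσ τ hτ

lemma IsMorseBott.eq_of_facet_of_lt {K : Finset (Finset ℕ)} {f : Finset ℕ → ℝ}
    (hf : IsMorseBott K f) {σ τ₁ τ₂ : Finset ℕ} (hσ : σ ∈ K) (hτ₁ : τ₁ ∈ K) (hτ₂ : τ₂ ∈ K)
    (hστ₁ : Facet σ τ₁) (hστ₂ : Facet σ τ₂) (hf₁ : f τ₁ < f σ) (hf₂ : f τ₂ < f σ) :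
    τ₁ = τ₂ := by
  obtain ⟨D, hD, hσD⟩ := exists_isCollection_mem f hσ
  have not_mem {τ} (hτ : f τ < f σ) : τ ∉ D := fun hτD => hτ.ne (hD.eq_of_mem hτD hσD)
  exact Finset.card_le_one.1 (hf D hD σ hσD).1 τ₁
    (Finset.mem_filter.2 ⟨hτ₁, not_mem hf₁, hστ₁, hf₁⟩) τ₂
    (Finset.mem_filter.2 ⟨hτ₂, not_mem hf₂, hστ₂, hf₂⟩)

lemma le_of_subset_of_mem_reducedOf {K : Finset (Finset ℕ)} (hK : IsComplex K)
    {f : Finset ℕ → ℝ} (hf : IsMorseBott K f) {C : Finset (Finset ℕ)}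
    (hC : IsCollection K f C) {v : ℝ} (hv : ∀ τ ∈ C, f τ = v) {τ : Finset ℕ}
    (hτ : τ ∈ reducedOf K f C) {σ : Finset ℕ} (hστ : σ ⊆ τ) (hσ : σ.Nonempty) :
    f σ ≤ v := by
  obtain ⟨hτC, -, hτdown⟩ := Finset.mem_filter.1 hτ
  have hτK : τ ∈ K := hC.1.1 hτC
  induction hn : #(τ \ σ) using Nat.strong_induction_on generalizing σ with
  | _ n ih =>
  by_contra! hvσ
  have hσC : σ ∉ C := fun hσC => hvσ.ne' (hv σ hσC)
  match n, hn with
  | 0, hn =>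
    rw [Finset.card_eq_zero, Finset.sdiff_eq_empty_iff_subset] at hn
    exact hvσ.not_ge (hv σ (Finset.Subset.antisymm hστ hn ▸ hτC)).le
  | 1, hn =>
    have hcard : #σ + 1 = #τ := by
      have := Finset.card_le_card hστ
      rw [← hn, Finset.card_sdiff_of_subset hστ]
      omega
    exact hτdown ⟨σ, hK.2 τ hτK σ hστ hσ, hσC, ⟨hστ, hcard⟩, hv τ hτC ▸ hvσ⟩
  | n + 2, hn =>
    obtain ⟨x, hx, y, hy, hxy⟩ := Finset.one_lt_card.1 (by omega : 1 < #(τ \ σ))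
    have cofacet {z} (hz : z ∈ τ \ σ) :
        insert z σ ∈ K ∧ Facet σ (insert z σ) ∧ f (insert z σ) < f σ := by
      obtain ⟨hzτ, hzσ⟩ := Finset.mem_sdiff.1 hz
      have hzστ : insert z σ ⊆ τ := Finset.insert_subset hzτ hστ
      have hle := ih (n + 1) (by omega) hzστ (Finset.insert_nonempty z σ) (by
        rw [Finset.sdiff_insert, Finset.card_erase_of_mem hz, hn]; rfl)
      exact ⟨hK.2 τ hτK _ hzστ (Finset.insert_nonempty z σ), Facet.insert hzσ,
        hle.trans_lt hvσ⟩
    obtain ⟨hxK, hxF, hxf⟩ := cofacet hx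
    obtain ⟨hyK, hyF, hyf⟩ := cofacet hy
    exact hxy <| (Finset.insert_inj (Finset.mem_sdiff.1 hx).2).1 <|
      hf.eq_of_facet_of_lt (hK.2 τ hτK σ hστ hσ) hxK hyK hxF hyF hxf hyf

/-- For a collection `C` with common value `v`, `I = C^red`,
`N = closure(I)` and `E = {σ ∈ N ∖ I : f σ ≤ v}`, one has `N ∖ E = C^red`;
equivalently `E = N ∖ C^red`. -/
theorem statement14 (K : Finset (Finset ℕ)) (hK : IsComplex K) (f : Finset ℕ → ℝ)
    (hf : IsMorseBott K f) (C : Finset (Finset ℕ)) (hC : IsCollection K f C)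
    (v : ℝ) (hv : ∀ τ ∈ C, f τ = v) :
    let I := reducedOf K f C
    let N := closureOf I
    let E := N.filter fun σ => σ ∉ I ∧ f σ ≤ v
    N \ E = I ∧ E = N \ I := by
  intro I N E
  have hIN : I ⊆ N :=
    subset_closureOf fun σ hσ => hK.1 σ (hC.1.1 (Finset.mem_filter.1 hσ).1)
  have hE : E = N \ I := by
    rw [Finset.sdiff_eq_filter]
    refine Finset.filter_congr fun σ hσ => and_iff_left_of_imp fun _ => ?_
    obtain ⟨τ, hτ, hστ, hσ⟩ := mem_closureOf.1 hσ
    exact le_of_subset_of_mem_reducedOf hK hf hC hv hτ hστ hσ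
  refine ⟨?_, hE⟩
  rw [hE, Finset.sdiff_sdiff_self_left, Finset.inter_eq_right.2 hIN]
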